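/- For any two distinct blocks B₁, B₂ of the Jungnickel–Tonchev design ([V], 𝒜' ∪ ℬ'), the intersection size |B₁ ∩ B₂| equals (q^i − 1)/(q − 1) for some integer i with 1 ≤ i ≤ e; these are exactly the intersection sizes of pairs of distinct blocks of the geometric design PG_e(2e,q). -/

import Mathlib

/-- The set of projective points (1-dimensional subspaces) contained in a subset `S` of `V`. -/
def projPts (K : Type*) {V : Type*} [Field K] [AddCommGroup V] [Module K V]
    (S : Set V) : Set (Submodule K V) :=
  {P | Module.finrank K P = 1 ∧ (P : Set V) ⊆ S}

/-- `𝒜`: the (e+1)-dimensional subspaces of `V` not contained in `H`. -/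
def setA {K V : Type*} [Field K] [AddCommGroup V] [Module K V]
    (e : ℕ) (H : Submodule K V) : Set (Submodule K V) :=
  {W | Module.finrank K W = e + 1 ∧ ¬ W ≤ H}

/-- `ℬ`: the (e-1)-dimensional subspaces of `H`. -/
def setB {K V : Type*} [Field K] [AddCommGroup V] [Module K V]
    (e : ℕ) (H : Submodule K V) : Set (Submodule K V) :=
  {W | Module.finrank K W = e - 1 ∧ W ≤ H}

/-- The block `[σ(W ∩ H) ∪ (W \ H)]` associated to `W ∈ 𝒜`. -/
def blockA {K V : Type*} [Field K] [AddCommGroup V] [Module K V]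
    (σ : Submodule K V → Submodule K V) (H W : Submodule K V) : Set (Submodule K V) :=
  projPts K ((σ (W ⊓ H) : Set V) ∪ ((W : Set V) \ (H : Set V)))

/-- The block `[σ(W)]` associated to `W ∈ ℬ`. -/
def blockB {K V : Type*} [Field K] [AddCommGroup V] [Module K V]
    (σ : Submodule K V → Submodule K V) (W : Submodule K V) : Set (Submodule K V) :=
  projPts K (σ W : Set V)

/-- The block set `𝒜' ∪ ℬ'` of the Jungnickel–Tonchev design. -/
def blocksJT {K V : Type*} [Field K] [AddCommGroup V] [Module K V]
    (e : ℕ) (σ : Submodule K V → Submodule K V) (H : Submodule K V) :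
    Set (Set (Submodule K V)) :=
  (blockA σ H '' setA e H) ∪
    {B | ∃ W : Submodule K V, Module.finrank K W = e + 1 ∧ W ≤ H ∧ B = projPts K (W : Set V)}

/-- The block set of the geometric design `PG_e(2e, q)`: the sets `[W]` for the
(e+1)-dimensional subspaces `W` of `V`. -/
def blocksPG {K V : Type*} [Field K] [AddCommGroup V] [Module K V]
    (e : ℕ) : Set (Set (Submodule K V)) :=
  {B | ∃ W : Submodule K V, Module.finrank K W = e + 1 ∧ B = projPts K (W : Set V)}

/-!
Write `[U]` for the set of points of a subspace `U`, so `|[U]| = θ(d) = 1 + q + ⋯ + q^(d-1)` when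
`dim U = d`. For `W ⊄ H` the block of `W` is the disjoint union `[σ(W ∩ H)] ∪ ([W] \ [H])`. Two
such blocks meet in `[σ(W₁ ∩ H) ∩ σ(W₂ ∩ H)] ∪ ([W₁ ∩ W₂] \ [H])`, and
`σ(W₁ ∩ H) ∩ σ(W₂ ∩ H) = σ((W₁ ∩ H) + (W₂ ∩ H))` has the dimension of `W₁ ∩ W₂ ∩ H`; so the
intersection has as many points as `[W₁ ∩ W₂]`, exactly as for two blocks of `PG_e(2e, q)`.
Such a block meets a block `[U]`, `U ≤ H`, in `[σ(W ∩ H) ∩ U]`, the meet of an `e`- and an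
`(e+1)`-dimensional subspace of the `2e`-dimensional `H`. Hence every intersection number is some
`θ(i)` with `1 ≤ i ≤ e`, and each of these occurs: take `W₁ = ⟨u⟩ + X₁`, `W₂ = ⟨u⟩ + X₂` with
`u ∉ H` and `e`-dimensional `X₁, X₂ ≤ H` meeting in dimension `i - 1`.
-/

section

open Module Set Submodule
open scoped LinearAlgebra.Projectivization

variable {K V : Type*} [Field K] [AddCommGroup V] [Module K V]

def intersectionNumbers {α : Type*} (𝓑 : Set (Set α)) : Set ℕ :=
  {n | ∃ B₁ ∈ 𝓑, ∃ B₂ ∈ 𝓑, B₁ ≠ B₂ ∧ (B₁ ∩ B₂).ncard = n}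

lemma mem_intersectionNumbers_of_ncard_lt {α : Type*} {𝓑 : Set (Set α)} {B₁ B₂ : Set α}
    (h₁ : B₁ ∈ 𝓑) (h₂ : B₂ ∈ 𝓑) (hlt : (B₁ ∩ B₂).ncard < B₁.ncard) :
    (B₁ ∩ B₂).ncard ∈ intersectionNumbers 𝓑 :=
  ⟨B₁, h₁, B₂, h₂, fun h => by rw [h, inter_self] at hlt; exact lt_irrefl _ hlt, rfl⟩

lemma geomSum_strictMono {q : ℕ} (hq : 1 ≤ q) :
    StrictMono fun n => ∑ k ∈ Finset.range n, q ^ k :=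
  strictMono_nat_of_lt_succ fun n => by
    rw [Finset.sum_range_succ]
    exact Nat.lt_add_of_pos_right (Nat.one_le_pow _ _ hq)

lemma union_sdiff_inter_union_sdiff {α : Type*} {A B C D E : Set α} (hA : A ⊆ E) (hB : B ⊆ E) :
    (A ∪ C \ E) ∩ (B ∪ D \ E) = A ∩ B ∪ (C ∩ D) \ E := by
  ext x
  have := @hA x
  have := @hB x
  simp only [mem_inter_iff, mem_union, mem_sdiff]
  tauto

lemma union_sdiff_inter_of_subset {α : Type*} {A B C E : Set α} (hB : B ⊆ E) :
    (A ∪ C \ E) ∩ B = A ∩ B := by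
  ext x
  have := @hB x
  simp only [mem_inter_iff, mem_union, mem_sdiff]
  tauto

section projPts

lemma mem_projPts_coe {U P : Submodule K V} :
    P ∈ projPts K (U : Set V) ↔ finrank K P = 1 ∧ P ≤ U :=
  Iff.rfl

lemma projPts_mono {S T : Set V} (h : S ⊆ T) : projPts K S ⊆ projPts K T :=
  fun _ hP => ⟨hP.1, hP.2.trans h⟩

lemma projPts_inf (U₁ U₂ : Submodule K V) :
    projPts K ((U₁ ⊓ U₂ : Submodule K V) : Set V) =
      projPts K (U₁ : Set V) ∩ projPts K (U₂ : Set V) := by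
  ext P
  simp only [mem_inter_iff, mem_projPts_coe, le_inf_iff]
  tauto

lemma ncard_projPts [Finite K] (U : Submodule K V) :
    (projPts K (U : Set V)).ncard = ∑ k ∈ Finset.range (finrank K U), Nat.card K ^ k := by
  have hrange : projPts K (U : Set V) =
      range fun p : ℙ K U => p.submodule.map U.subtype := by
    ext P
    rw [mem_projPts_coe]
    constructor
    · rintro ⟨hP, hPU⟩
      have hmap : (P.comap U.subtype).map U.subtype = P := by
        rw [map_comap_subtype, inf_eq_right.2 hPU]
      refine ⟨Projectivization.mk'' (P.comap U.subtype) ?_, ?_⟩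
      · rwa [← finrank_map_subtype_eq, hmap]
      · simp only [Projectivization.submodule_mk'', hmap]
    · rintro ⟨p, rfl⟩
      exact ⟨(finrank_map_subtype_eq _ _).trans p.finrank_submodule, map_subtype_le _ _⟩
  rw [hrange, ncard_range_of_injective, Projectivization.card_of_finrank K U rfl]
  exact (map_injective_of_injective U.injective_subtype).comp
    Projectivization.submodule_injective

lemma projPts_union_sdiff {S W H : Submodule K V} (hS : S ≤ H) :
    projPts K ((S : Set V) ∪ (W : Set V) \ (H : Set V)) =
      projPts K (S : Set V) ∪ projPts K (W : Set V) \ projPts K (H : Set V) := by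
  ext P
  simp only [projPts, mem_ofPred_eq, mem_union, mem_sdiff, SetLike.coe_subset_coe]
  constructor
  · rintro ⟨hP, hsub⟩
    by_cases hPH : P ≤ H
    · exact Or.inl ⟨hP, fun x hx => (hsub hx).resolve_right fun h => h.2 (hPH hx)⟩
    · obtain ⟨x, hxP, hxH⟩ := SetLike.not_le_iff_exists.1 hPH
      have hPx := eq_span_singleton_of_mem_of_finrank_eq_one hP hxP
        (by rintro rfl; exact hxH H.zero_mem)
      have hxW : x ∈ W := ((hsub hxP).resolve_left fun h => hxH (hS h)).1
      exact Or.inr ⟨⟨hP, hPx ▸ (span_singleton_le_iff_mem _ _).2 hxW⟩, fun h => hPH h.2⟩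
  · rintro (⟨hP, hPS⟩ | ⟨⟨hP, hPW⟩, hPH⟩)
    · exact ⟨hP, fun x hx => Or.inl (hPS hx)⟩
    · refine ⟨hP, fun y hy => ?_⟩
      by_cases hyH : y ∈ H
      · have hy0 : y = 0 := by
          by_contra hy0
          have hPy := eq_span_singleton_of_mem_of_finrank_eq_one hP hy hy0
          exact hPH ⟨hP, hPy ▸ (span_singleton_le_iff_mem _ _).2 hyH⟩
        exact Or.inl (hy0 ▸ S.zero_mem)
      · exact Or.inr ⟨hPW hy, hyH⟩

end projPts

section finrank

variable [FiniteDimensional K V]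

lemma finrank_inf_add_one_of_not_le {H W : Submodule K V}
    (hH : finrank K H + 1 = finrank K V) (hW : ¬ W ≤ H) :
    finrank K ↥(W ⊓ H) + 1 = finrank K W := by
  have hlt := finrank_lt_finrank_of_lt (right_lt_sup.2 hW)
  have hsup := finrank_le (W ⊔ H)
  have := finrank_sup_add_finrank_inf_eq W H
  omega

lemma finrank_add_finrank_le_of_sup_le {U₁ U₂ Z : Submodule K V} (h : U₁ ⊔ U₂ ≤ Z) :
    finrank K U₁ + finrank K U₂ ≤ finrank K ↥(U₁ ⊓ U₂) + finrank K Z := by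
  have := finrank_sup_add_finrank_inf_eq U₁ U₂
  have := finrank_mono h
  omega

lemma finrank_inf_mem_Icc_of_ne {e : ℕ} (hV : finrank K V = 2 * e + 1) {U₁ U₂ : Submodule K V}
    (h₁ : finrank K U₁ = e + 1) (h₂ : finrank K U₂ = e + 1) (hne : U₁ ≠ U₂) :
    finrank K ↥(U₁ ⊓ U₂) ∈ Icc 1 e := by
  have hlt : finrank K ↥(U₁ ⊓ U₂) < finrank K U₁ :=
    finrank_lt_finrank_of_lt
      (inf_lt_left.2 fun hle => hne (eq_of_le_of_finrank_eq hle (h₁.trans h₂.symm)))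
  have := finrank_add_finrank_le_of_sup_le (le_top : U₁ ⊔ U₂ ≤ ⊤)
  rw [finrank_top] at this
  constructor <;> omega

lemma finrank_span_singleton_sup {H Z : Submodule K V} {u : V} (hu : u ∉ H) (hZ : Z ≤ H) :
    finrank K ↥((K ∙ u) ⊔ Z) = finrank K Z + 1 := by
  have hdisj : (K ∙ u) ⊓ Z = ⊥ :=
    (disjoint_span_singleton' (x := u) (s := Z) (by rintro rfl; exact hu H.zero_mem)).2
      (fun h => hu (hZ h)) |>.symm.eq_bot
  have := finrank_sup_add_finrank_inf_eq (K ∙ u) Z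
  rw [hdisj, finrank_bot, finrank_span_singleton (by rintro rfl; exact hu H.zero_mem)] at this
  omega

end finrank

lemma Finset.exists_card_eq_card_eq_card_union_eq {α : Type*} [Fintype α] [DecidableEq α] {a c : ℕ}
    (hc : c ≤ a) (h : 2 * a - c ≤ Fintype.card α) :
    ∃ s t : Finset α, s.card = a ∧ t.card = a ∧ (s ∪ t).card = 2 * a - c := by
  obtain ⟨S, -, hS⟩ := Finset.exists_subset_card_eq (s := (Finset.univ : Finset α)) (n := 2 * a - c)
    (by rwa [Finset.card_univ])
  obtain ⟨s, hsS, hs⟩ := Finset.exists_subset_card_eq (s := S) (n := a) (by omega)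
  obtain ⟨C, hCs, hC⟩ := Finset.exists_subset_card_eq (s := s) (n := c) (by omega)
  refine ⟨s, S \ s ∪ C, hs, ?_, ?_⟩
  · rw [Finset.card_union_of_disjoint (Finset.sdiff_disjoint.mono_right hCs),
      Finset.card_sdiff_of_subset hsS]
    omega
  · rwa [← Finset.union_assoc, Finset.union_sdiff_of_subset hsS,
      Finset.union_eq_left.2 (hCs.trans hsS)]

lemma exists_finrank_eq_finrank_sup_eq {M : Type*} [AddCommGroup M] [Module K M] {a c : ℕ}
    (hc : c ≤ a) (h : 2 * a - c ≤ finrank K M) :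
    ∃ X Y : Submodule K M, finrank K X = a ∧ finrank K Y = a ∧ finrank K ↥(X ⊔ Y) = 2 * a - c := by
  obtain ⟨f, hf⟩ := exists_linearIndependent_of_le_finrank h
  obtain ⟨s, t, hs, ht, hst⟩ :=
    Finset.exists_card_eq_card_eq_card_union_eq (α := Fin (2 * a - c)) hc (by simp)
  have hdim : ∀ r : Finset (Fin (2 * a - c)), finrank K (span K (f '' r)) = r.card := fun r => by
    rw [image_eq_range]
    exact (finrank_span_eq_card (hf.comp _ Subtype.val_injective)).trans (Fintype.card_coe _)
  refine ⟨span K (f '' s), span K (f '' t), by rw [hdim, hs], by rw [hdim, ht], ?_⟩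
  rw [← span_union, ← image_union, ← Finset.coe_union, hdim, hst]

lemma exists_pair_mem_setA_finrank_inf_eq [FiniteDimensional K V] {e i : ℕ} {H : Submodule K V}
    (hV : finrank K V = 2 * e + 1) (hH : finrank K H = 2 * e) (hi : i ∈ Icc 1 e) :
    ∃ W₁ ∈ setA e H, ∃ W₂ ∈ setA e H, finrank K ↥(W₁ ⊓ W₂) = i := by
  obtain ⟨hi1, hie⟩ := hi
  obtain ⟨u, -, hu⟩ := SetLike.exists_of_lt
    (lt_top_iff_ne_top.2 fun h => by rw [h, finrank_top] at hH; omega : H < ⊤)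
  obtain ⟨X, Y, hX, hY, hXY⟩ :=
    exists_finrank_eq_finrank_sup_eq (K := K) (M := H) (a := e) (c := i - 1) (by omega) (by omega)
  have hdim : ∀ Z : Submodule K H,
      finrank K ↥((K ∙ u) ⊔ Z.map H.subtype) = finrank K Z + 1 := fun Z => by
    rw [finrank_span_singleton_sup hu (map_subtype_le _ _), finrank_map_subtype_eq]
  have hnotle : ∀ Z : Submodule K H, ¬ (K ∙ u) ⊔ Z.map H.subtype ≤ H :=
    fun Z h => hu (h (mem_sup_left (mem_span_singleton_self u)))
  refine ⟨_, ⟨by rw [hdim, hX], hnotle X⟩, _, ⟨by rw [hdim, hY], hnotle Y⟩, ?_⟩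
  have hsup : ((K ∙ u) ⊔ X.map H.subtype) ⊔ ((K ∙ u) ⊔ Y.map H.subtype) =
      (K ∙ u) ⊔ (X ⊔ Y).map H.subtype := by
    rw [Submodule.map_sup, sup_sup_sup_comm, sup_idem]
  have := finrank_sup_add_finrank_inf_eq ((K ∙ u) ⊔ X.map H.subtype) ((K ∙ u) ⊔ Y.map H.subtype)
  rw [hsup, hdim, hdim, hdim, hX, hY, hXY] at this
  omega

lemma finrank_inf_of_mem_setA [FiniteDimensional K V] {e : ℕ} {H : Submodule K V}
    (hV : finrank K V = 2 * e + 1) (hH : finrank K H = 2 * e)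
    {W : Submodule K V} (hW : W ∈ setA e H) : finrank K ↥(W ⊓ H) = e := by
  have := finrank_inf_add_one_of_not_le (by omega) hW.2
  have := hW.1
  omega

lemma ncard_projPts_union_sdiff_inter [Finite K] [FiniteDimensional K V]
    {S₁ S₂ W₁ W₂ H : Submodule K V} (hS₁ : S₁ ≤ H) (hS₂ : S₂ ≤ H)
    (hS : finrank K ↥(S₁ ⊓ S₂) = finrank K ↥(W₁ ⊓ W₂ ⊓ H)) :
    (projPts K ((S₁ : Set V) ∪ (W₁ : Set V) \ (H : Set V)) ∩
        projPts K ((S₂ : Set V) ∪ (W₂ : Set V) \ (H : Set V))).ncard =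
      (projPts K ((W₁ ⊓ W₂ : Submodule K V) : Set V)).ncard := by
  have : Finite V := Module.finite_of_finite K
  have : Finite (Submodule K V) := Finite.of_injective _ SetLike.coe_injective
  rw [projPts_union_sdiff hS₁, projPts_union_sdiff hS₂,
    union_sdiff_inter_union_sdiff (projPts_mono (SetLike.coe_subset_coe.2 hS₁))
      (projPts_mono (SetLike.coe_subset_coe.2 hS₂)), ← projPts_inf, ← projPts_inf,
    ncard_union_eq (disjoint_sdiff_right.mono_left
      (projPts_mono (SetLike.coe_subset_coe.2 (inf_le_left.trans hS₁)))),
    ← ncard_inter_add_ncard_sdiff_eq_ncard (projPts K ((W₁ ⊓ W₂ : Submodule K V) : Set V))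
      (projPts K (H : Set V)), ← projPts_inf,
    ncard_projPts, ncard_projPts, hS]

section JungnickelTonchev

variable [Finite K] [FiniteDimensional K V] {e : ℕ} {H : Submodule K V}
  {σ : Submodule K V → Submodule K V}

lemma ncard_blockA_inter_blockA (hV : finrank K V = 2 * e + 1) (hH : finrank K H = 2 * e)
    (hσle : ∀ W ≤ H, σ W ≤ H)
    (hσinf : ∀ W₁ W₂ : Submodule K V, W₁ ≤ H → W₂ ≤ H → σ W₁ ⊓ σ W₂ = σ (W₁ ⊔ W₂))
    (hσrank : ∀ W ≤ H, finrank K ↥(σ W) = 2 * e - finrank K ↥W)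
    {W₁ W₂ : Submodule K V} (hW₁ : W₁ ∈ setA e H) (hW₂ : W₂ ∈ setA e H) :
    (blockA σ H W₁ ∩ blockA σ H W₂).ncard =
      (projPts K ((W₁ ⊓ W₂ : Submodule K V) : Set V)).ncard := by
  refine ncard_projPts_union_sdiff_inter (hσle _ inf_le_right) (hσle _ inf_le_right) ?_
  have hsum := finrank_sup_add_finrank_inf_eq (W₁ ⊓ H) (W₂ ⊓ H)
  rw [finrank_inf_of_mem_setA hV hH hW₁, finrank_inf_of_mem_setA hV hH hW₂,
    ← inf_inf_distrib_right] at hsum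
  rw [hσinf _ _ inf_le_right inf_le_right, hσrank _ (sup_le inf_le_right inf_le_right)]
  omega

lemma ncard_blockA_inter_projPts_mem (hV : finrank K V = 2 * e + 1) (hH : finrank K H = 2 * e)
    (hσle : ∀ W ≤ H, σ W ≤ H) (hσrank : ∀ W ≤ H, finrank K ↥(σ W) = 2 * e - finrank K ↥W)
    {W U : Submodule K V} (hW : W ∈ setA e H) (hU : finrank K U = e + 1) (hUH : U ≤ H) :
    (blockA σ H W ∩ projPts K (U : Set V)).ncard ∈
      (fun i => ∑ k ∈ Finset.range i, Nat.card K ^ k) '' Icc 1 e := by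
  have hσW := hσle _ (inf_le_right : W ⊓ H ≤ H)
  rw [blockA, projPts_union_sdiff hσW,
    union_sdiff_inter_of_subset (projPts_mono (SetLike.coe_subset_coe.2 hUH)), ← projPts_inf]
  have hdim : finrank K ↥(σ (W ⊓ H)) = e := by
    rw [hσrank _ inf_le_right, finrank_inf_of_mem_setA hV hH hW]
    omega
  have hlow := finrank_add_finrank_le_of_sup_le (sup_le hσW hUH)
  have hup := finrank_mono (inf_le_left : σ (W ⊓ H) ⊓ U ≤ _)
  exact ⟨_, ⟨by omega, by omega⟩, (ncard_projPts _).symm⟩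

theorem intersectionNumbers_blocksJT (hV : finrank K V = 2 * e + 1) (hH : finrank K H = 2 * e)
    (hσle : ∀ W ≤ H, σ W ≤ H)
    (hσinf : ∀ W₁ W₂ : Submodule K V, W₁ ≤ H → W₂ ≤ H → σ W₁ ⊓ σ W₂ = σ (W₁ ⊔ W₂))
    (hσrank : ∀ W ≤ H, finrank K ↥(σ W) = 2 * e - finrank K ↥W) :
    intersectionNumbers (blocksJT e σ H) =
      (fun i => ∑ k ∈ Finset.range i, Nat.card K ^ k) '' Icc 1 e := by
  have hAA {W₁ W₂ : Submodule K V} := ncard_blockA_inter_blockA (W₁ := W₁) (W₂ := W₂)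
    hV hH hσle hσinf hσrank
  have hAB {W U : Submodule K V} := ncard_blockA_inter_projPts_mem (W := W) (U := U)
    hV hH hσle hσrank
  apply Subset.antisymm
  · rintro _ ⟨B₁, hB₁, B₂, hB₂, hne, rfl⟩
    rcases hB₁ with ⟨W₁, hW₁, rfl⟩ | ⟨U₁, hU₁, hU₁H, rfl⟩ <;>
      rcases hB₂ with ⟨W₂, hW₂, rfl⟩ | ⟨U₂, hU₂, hU₂H, rfl⟩
    · rw [hAA hW₁ hW₂]
      exact ⟨_, finrank_inf_mem_Icc_of_ne hV hW₁.1 hW₂.1 (by rintro rfl; exact hne rfl),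
        (ncard_projPts _).symm⟩
    · exact hAB hW₁ hU₂ hU₂H
    · rw [inter_comm]
      exact hAB hW₂ hU₁ hU₁H
    · rw [← projPts_inf]
      exact ⟨_, finrank_inf_mem_Icc_of_ne hV hU₁ hU₂ (by rintro rfl; exact hne rfl),
        (ncard_projPts _).symm⟩
  · rintro _ ⟨i, hi, rfl⟩
    obtain ⟨W₁, hW₁, W₂, hW₂, hW₁₂⟩ := exists_pair_mem_setA_finrank_inf_eq hV hH hi
    have hcard := hAA hW₁ hW₂
    rw [ncard_projPts, hW₁₂] at hcard
    dsimp only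
    rw [← hcard]
    refine mem_intersectionNumbers_of_ncard_lt (Or.inl ⟨W₁, hW₁, rfl⟩) (Or.inl ⟨W₂, hW₂, rfl⟩) ?_
    rw [hcard, ← inter_self (blockA σ H W₁), hAA hW₁ hW₁, inf_idem, ncard_projPts, hW₁.1]
    exact geomSum_strictMono Nat.card_pos (Nat.lt_succ_of_le hi.2)

end JungnickelTonchev

theorem intersectionNumbers_blocksPG [Finite K] [FiniteDimensional K V] {e : ℕ}
    (hV : finrank K V = 2 * e + 1) :
    intersectionNumbers (blocksPG (K := K) (V := V) e) =
      (fun i => ∑ k ∈ Finset.range i, Nat.card K ^ k) '' Icc 1 e := by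
  apply Subset.antisymm
  · rintro _ ⟨_, ⟨U₁, hU₁, rfl⟩, _, ⟨U₂, hU₂, rfl⟩, hne, rfl⟩
    rw [← projPts_inf]
    exact ⟨_, finrank_inf_mem_Icc_of_ne hV hU₁ hU₂ (by rintro rfl; exact hne rfl),
      (ncard_projPts _).symm⟩
  · rintro _ ⟨i, ⟨hi1, hie⟩, rfl⟩
    obtain ⟨W₁, W₂, hW₁, hW₂, hsup⟩ :=
      exists_finrank_eq_finrank_sup_eq (K := K) (M := V) (a := e + 1) (c := i) (by omega) (by omega)
    have hinf := finrank_sup_add_finrank_inf_eq W₁ W₂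
    have hcard : (projPts K (W₁ : Set V) ∩ projPts K (W₂ : Set V)).ncard =
        ∑ k ∈ Finset.range i, Nat.card K ^ k := by
      rw [← projPts_inf, ncard_projPts]
      congr
      omega
    dsimp only
    rw [← hcard]
    refine mem_intersectionNumbers_of_ncard_lt ⟨W₁, hW₁, rfl⟩ ⟨W₂, hW₂, rfl⟩ ?_
    rw [hcard, ncard_projPts, hW₁]
    exact geomSum_strictMono Nat.card_pos (Nat.lt_succ_of_le hie)

end

theorem stmt12_general (q e : ℕ)
    (K V : Type*) [Field K] [Fintype K] (hK : Fintype.card K = q)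
    [AddCommGroup V] [Module K V] [FiniteDimensional K V]
    (hV : Module.finrank K V = 2 * e + 1)
    (H : Submodule K V) (hH : Module.finrank K ↥H = 2 * e)
    (σ : Submodule K V → Submodule K V)
    (hσle : ∀ W ≤ H, σ W ≤ H)
    (hσinf : ∀ W₁ W₂ : Submodule K V, W₁ ≤ H → W₂ ≤ H → σ W₁ ⊓ σ W₂ = σ (W₁ ⊔ W₂))
    (hσrank : ∀ W ≤ H, Module.finrank K ↥(σ W) = 2 * e - Module.finrank K ↥W)
    :
    (∀ B₁ ∈ blocksJT e σ H, ∀ B₂ ∈ blocksJT e σ H, B₁ ≠ B₂ →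
      ∃ i : ℕ, 1 ≤ i ∧ i ≤ e ∧ (B₁ ∩ B₂).ncard = (q ^ i - 1) / (q - 1)) ∧
    {n : ℕ | ∃ B₁ ∈ blocksJT e σ H, ∃ B₂ ∈ blocksJT e σ H, B₁ ≠ B₂ ∧ (B₁ ∩ B₂).ncard = n} =
      {n : ℕ | ∃ B₁ ∈ blocksPG (K := K) (V := V) e, ∃ B₂ ∈ blocksPG (K := K) (V := V) e,
        B₁ ≠ B₂ ∧ (B₁ ∩ B₂).ncard = n} := by
  have hJT := intersectionNumbers_blocksJT hV hH hσle hσinf hσrank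
  have hPG := intersectionNumbers_blocksPG (K := K) hV
  rw [Nat.card_eq_fintype_card, hK] at hJT hPG
  refine ⟨fun B₁ h₁ B₂ h₂ hne => ?_, hJT.trans hPG.symm⟩
  obtain ⟨i, ⟨hi1, hie⟩, hi⟩ := hJT.subset ⟨B₁, h₁, B₂, h₂, hne, rfl⟩
  exact ⟨i, hi1, hie, hi.symm.trans (Nat.geomSum_eq (hK ▸ Fintype.one_lt_card) i)⟩

/-- Any two distinct blocks of the Jungnickel–Tonchev design meet in
`(q^i - 1)/(q - 1)` points for some `1 ≤ i ≤ e`, and the set of intersection sizes of pairs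
of distinct blocks is exactly the same as for the geometric design `PG_e(2e, q)`. -/
theorem stmt12 (q e : ℕ) (hq : ∃ p n : ℕ, p.Prime ∧ 0 < n ∧ q = p ^ n) (he : 2 ≤ e)
    (K V : Type*) [Field K] [Fintype K] (hK : Fintype.card K = q)
    [AddCommGroup V] [Module K V] [FiniteDimensional K V]
    (hV : Module.finrank K V = 2 * e + 1)
    (H : Submodule K V) (hH : Module.finrank K ↥H = 2 * e)
    (σ : Submodule K V → Submodule K V)
    (hσle : ∀ W ≤ H, σ W ≤ H)
    (hσinv : ∀ W ≤ H, σ (σ W) = W)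
    (hσanti : ∀ W₁ W₂ : Submodule K V, W₁ ≤ H → W₂ ≤ H → W₁ ≤ W₂ → σ W₂ ≤ σ W₁)
    (hσinf : ∀ W₁ W₂ : Submodule K V, W₁ ≤ H → W₂ ≤ H → σ W₁ ⊓ σ W₂ = σ (W₁ ⊔ W₂))
    (hσrank : ∀ W ≤ H, Module.finrank K ↥(σ W) = 2 * e - Module.finrank K ↥W)
    :
    (∀ B₁ ∈ blocksJT e σ H, ∀ B₂ ∈ blocksJT e σ H, B₁ ≠ B₂ →
      ∃ i : ℕ, 1 ≤ i ∧ i ≤ e ∧ (B₁ ∩ B₂).ncard = (q ^ i - 1) / (q - 1)) ∧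
    {n : ℕ | ∃ B₁ ∈ blocksJT e σ H, ∃ B₂ ∈ blocksJT e σ H, B₁ ≠ B₂ ∧ (B₁ ∩ B₂).ncard = n} =
      {n : ℕ | ∃ B₁ ∈ blocksPG (K := K) (V := V) e, ∃ B₂ ∈ blocksPG (K := K) (V := V) e,
        B₁ ≠ B₂ ∧ (B₁ ∩ B₂).ncard = n} :=
  stmt12_general q e K V hK hV H hH σ hσle hσinf hσrank
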